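/- Let φ be a simple, normalized valuation on convex polyhedral cones in ℝⁿ and P a compact convex polytope. Then φ(N(P,x)) ≠ 0 implies x is a vertex of P, and Σ_{x ∈ vert P} φ(N(P,x)) = 1. -/

import Mathlib

/-! A non-vertex `x` of `P` is interior to a segment `[x₁, x₂] ⊆ P`, so every `u ∈ N(P,x)` is
orthogonal to `x₁ - x` and `N(P,x)` is lower-dimensional, hence killed by `φ`.

For `P = conv s`, compare `φ` with `C ↦ ∑_{x ∈ s} φ(C ∩ N(P,x))`. Because `φ` is simple, both are
additive under cutting a cone by a hyperplane through the origin, so it suffices that they agree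
on the pieces obtained by cutting along all hyperplanes `(v - w)^⊥`, `v, w ∈ s`. On such a piece
`C` the preorder `v ≼ w ↔ ∀ u ∈ C, ⟪u, v⟫ ≤ ⟪u, w⟫` is total, so `C ⊆ N(P,m)` for a maximum `m`,
while `C ∩ N(P,x)` lies in `(x - m)^⊥` for `x ≠ m`. Cutting avoids inclusion–exclusion over the
normal fan, which a valuation defined only on convex cones does not directly provide. -/

open scoped RealInnerProductSpace
open MeasureTheory

attribute [local instance] Classical.propDecidable

noncomputable section

abbrev E (n : ℕ) : Type := EuclideanSpace ℝ (Fin n)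

/-- The dual cone `C° = {x : ⟪x,y⟫ ≤ 0 for all y ∈ C}`. -/
def polarDual {n : ℕ} (C : Set (E n)) : Set (E n) := {x | ∀ y ∈ C, ⟪x, y⟫ ≤ 0}

/-- A convex polyhedral cone: a finite intersection of closed halfspaces whose
boundaries contain the origin (empty intersection = ℝⁿ). -/
def IsPolyhedralCone {n : ℕ} (C : Set (E n)) : Prop :=
  ∃ s : Finset (E n), C = {x | ∀ u ∈ s, ⟪u, x⟫ ≤ 0}

/-- A (nonempty) compact convex polytope: the convex hull of a nonempty finite set. -/
def IsPolytope {n : ℕ} (P : Set (E n)) : Prop :=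
  ∃ s : Finset (E n), s.Nonempty ∧ P = convexHull ℝ (s : Set (E n))

/-- A polyhedron: a finite union of compact convex polytopes (possibly empty). -/
def IsPolyhedron {n : ℕ} (P : Set (E n)) : Prop :=
  ∃ F : Finset (Set (E n)), (∀ A ∈ F, IsPolytope A) ∧ P = ⋃₀ F

/-- The tangent cone `Tan(P,x) = {v : [x, x+λv] ⊆ P for some λ > 0}`. -/
def Tan {n : ℕ} (P : Set (E n)) (x : E n) : Set (E n) :=
  {v | ∃ l : ℝ, 0 < l ∧ segment ℝ x (x + l • v) ⊆ P}

/-- The (linear) dimension of a cone, i.e. the dimension of its linear span. -/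
def coneDim {n : ℕ} (C : Set (E n)) : ℕ := Module.finrank ℝ (Submodule.span ℝ C)

/-- A valuation on the family of convex polyhedral cones. -/
def IsConeValuation {n : ℕ} (φ : Set (E n) → ℝ) : Prop :=
  ∀ C D : Set (E n), IsPolyhedralCone C → IsPolyhedralCone D → IsPolyhedralCone (C ∪ D) →
    φ (C ∪ D) + φ (C ∩ D) = φ C + φ D

/-- A simple valuation vanishes on cones of dimension `< n`. -/
def IsSimple {n : ℕ} (φ : Set (E n) → ℝ) : Prop :=
  ∀ C : Set (E n), IsPolyhedralCone C → coneDim C < n → φ C = 0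

/-- A finite union of convex polyhedral cones (possibly empty). -/
def IsConeUnion {n : ℕ} (S : Set (E n)) : Prop :=
  ∃ F : Finset (Set (E n)), (∀ A ∈ F, IsPolyhedralCone A) ∧ S = ⋃₀ F

/-- A relatively open polyhedral cone: the relative interior of a convex polyhedral cone. -/
def IsROCone {n : ℕ} (A : Set (E n)) : Prop :=
  ∃ C : Set (E n), IsPolyhedralCone C ∧ A = intrinsicInterior ℝ C

/-- A finite union of relatively open polyhedral cones (possibly empty). -/
def IsROConeUnion {n : ℕ} (S : Set (E n)) : Prop :=
  ∃ F : Finset (Set (E n)), (∀ A ∈ F, IsROCone A) ∧ S = ⋃₀ F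

/-- The normal cone `N(P,x) = {u : ⟪u, y - x⟫ ≤ 0 for all y ∈ P}`. -/
def normalCone {n : ℕ} (P : Set (E n)) (x : E n) : Set (E n) :=
  {u | ∀ y ∈ P, ⟪u, y - x⟫ ≤ 0}

/-- The outer angle `Γ(C) = σ(C° ∩ S^{n-1})`, expressed via the normalized
solid-angle (cone-volume) measure, which agrees with the normalized spherical
Lebesgue measure of `C° ∩ S^{n-1}` for cones `C°`. -/
def outerAngle {n : ℕ} (C : Set (E n)) : ℝ :=
  (volume (polarDual C ∩ Metric.closedBall (0 : E n) 1)).toReal /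
    (volume (Metric.closedBall (0 : E n) 1)).toReal

open scoped Pointwise

theorem Finset.exists_mem_forall_rel_of_total {ι : Type*} {r : ι → ι → Prop} (s : Finset ι)
    (hs : s.Nonempty) (htrans : ∀ a b c, r a b → r b c → r a c)
    (htotal : ∀ a ∈ s, ∀ b ∈ s, r a b ∨ r b a) : ∃ m ∈ s, ∀ a ∈ s, r a m := by
  obtain ⟨m, hm, hmax⟩ := s.exists_maximalFor (fun b => {a | r a b}) hs
  refine ⟨m, hm, fun a ha => ?_⟩
  rcases htotal a ha m hm with ham | hma
  · exact ham
  · have hle : {c | r c m} ⊆ {c | r c a} := fun c hcm => htrans c m a hcm hma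
    exact hmax ha hle ((htotal a ha a ha).elim id id)

section

variable {n : ℕ}

theorem isPolyhedralCone_univ : IsPolyhedralCone (Set.univ : Set (E n)) :=
  ⟨∅, by simp⟩

theorem isPolyhedralCone_halfspace (d : E n) : IsPolyhedralCone {u : E n | ⟪d, u⟫ ≤ 0} :=
  ⟨{d}, by simp⟩

theorem IsPolyhedralCone.inter {C D : Set (E n)} (hC : IsPolyhedralCone C)
    (hD : IsPolyhedralCone D) : IsPolyhedralCone (C ∩ D) := by
  obtain ⟨s, rfl⟩ := hC
  obtain ⟨t, rfl⟩ := hD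
  refine ⟨s ∪ t, ?_⟩
  ext x
  simp only [Set.mem_inter_iff, Set.mem_ofPred_eq, Finset.mem_union, or_imp, forall_and]

theorem normalCone_anti {s t : Set (E n)} (h : s ⊆ t) (x : E n) :
    normalCone t x ⊆ normalCone s x :=
  fun _ hu y hy => hu y (h hy)

theorem normalCone_convexHull (s : Set (E n)) (x : E n) :
    normalCone (convexHull ℝ s) x = normalCone s x := by
  refine (normalCone_anti (subset_convexHull ℝ s) x).antisymm fun u hu => ?_
  have hconv : Convex ℝ {y : E n | ⟪u, y - x⟫ ≤ 0} := by
    simp_rw [inner_sub_right, sub_nonpos]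
    exact convex_halfSpace_le (innerₛₗ ℝ u).isLinear _
  exact fun y hy => convexHull_min hu hconv hy

theorem isPolyhedralCone_normalCone_finset (s : Finset (E n)) (x : E n) :
    IsPolyhedralCone (normalCone (s : Set (E n)) x) := by
  refine ⟨s.image (· - x), ?_⟩
  ext u
  simp [normalCone, real_inner_comm]

theorem IsPolytope.isPolyhedralCone_normalCone {P : Set (E n)} (hP : IsPolytope P) (x : E n) :
    IsPolyhedralCone (normalCone P x) := by
  obtain ⟨s, -, rfl⟩ := hP
  rw [normalCone_convexHull]
  exact isPolyhedralCone_normalCone_finset s x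

theorem polarDual_anti {C D : Set (E n)} (h : C ⊆ D) : polarDual D ⊆ polarDual C :=
  fun _ hx y hy => hx y (h hy)

theorem add_mem_polarDual {C : Set (E n)} {a b : E n} (ha : a ∈ polarDual C)
    (hb : b ∈ polarDual C) : a + b ∈ polarDual C := fun y hy => by
  rw [inner_add_left]
  linarith [ha y hy, hb y hy]

theorem IsSimple.apply_eq_zero_of_inner_eq_zero {φ : Set (E n) → ℝ} (hsimple : IsSimple φ)
    {C : Set (E n)} (hC : IsPolyhedralCone C) {d : E n} (hd : d ≠ 0)
    (h : ∀ u ∈ C, ⟪d, u⟫ = 0) : φ C = 0 := by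
  refine hsimple C hC ?_
  have hspan : Submodule.span ℝ C ≤ (ℝ ∙ d)ᗮ := by
    rw [Submodule.span_le]
    intro u hu
    exact Submodule.mem_orthogonal_singleton_iff_inner_right.mpr (h u hu)
  have hne : (ℝ ∙ d)ᗮ ≠ ⊤ := by
    rwa [Ne, Submodule.orthogonal_eq_top_iff, Submodule.span_singleton_eq_bot]
  calc coneDim C ≤ Module.finrank ℝ (ℝ ∙ d)ᗮ := Submodule.finrank_mono hspan
    _ < Module.finrank ℝ (E n) := Submodule.finrank_lt hne
    _ = n := finrank_euclideanSpace_fin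

theorem IsSimple.apply_normalCone_eq_zero {φ : Set (E n) → ℝ} (hsimple : IsSimple φ)
    {P : Set (E n)} {x : E n} (hN : IsPolyhedralCone (normalCone P x)) (hx : x ∈ P)
    (hext : x ∉ Set.extremePoints ℝ P) : φ (normalCone P x) = 0 := by
  simp only [mem_extremePoints, hx, true_and, not_forall] at hext
  obtain ⟨x₁, hx₁, x₂, hx₂, hseg, hne⟩ := hext
  have hx₁x : x₁ ≠ x := by
    rintro rfl
    exact hne ⟨rfl, (left_mem_openSegment_iff.mp hseg).symm⟩
  obtain ⟨a, b, ha, hb, hab, rfl⟩ := hseg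
  refine hsimple.apply_eq_zero_of_inner_eq_zero hN (sub_ne_zero.mpr hx₁x) fun u hu => ?_
  set x := a • x₁ + b • x₂
  have hbalance : a • (x₁ - x) + b • (x₂ - x) = 0 := by
    rw [smul_sub, smul_sub, sub_add_sub_comm, ← add_smul, hab, one_smul, sub_self]
  have hsum : a * ⟪u, x₁ - x⟫ + b * ⟪u, x₂ - x⟫ = 0 := by
    rw [← real_inner_smul_right, ← real_inner_smul_right, ← inner_add_right, hbalance,
      inner_zero_right]
  have h₁ := hu x₁ hx₁
  have h₂ := hu x₂ hx₂
  rw [real_inner_comm]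
  nlinarith

def OnOneSide (d : E n) (C : Set (E n)) : Prop :=
  d ∈ polarDual C ∨ -d ∈ polarDual C

def IsCutAdditive (f : Set (E n) → ℝ) : Prop :=
  ∀ C, IsPolyhedralCone C → ∀ d ≠ 0,
    f C = f (C ∩ {u | ⟪d, u⟫ ≤ 0}) + f (C ∩ {u | ⟪-d, u⟫ ≤ 0})

theorem IsConeValuation.isCutAdditive {φ : Set (E n) → ℝ} (hφ : IsConeValuation φ)
    (hsimple : IsSimple φ) : IsCutAdditive φ := by
  intro C hC d hd
  have hneg : IsPolyhedralCone (C ∩ {u | ⟪d, u⟫ ≤ 0}) :=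
    hC.inter (isPolyhedralCone_halfspace d)
  have hpos : IsPolyhedralCone (C ∩ {u | ⟪-d, u⟫ ≤ 0}) :=
    hC.inter (isPolyhedralCone_halfspace (-d))
  have hunion : C ∩ {u | ⟪d, u⟫ ≤ 0} ∪ C ∩ {u | ⟪-d, u⟫ ≤ 0} = C := by
    rw [← Set.inter_union_distrib_left, Set.inter_eq_left]
    intro u _
    simp only [Set.mem_union, Set.mem_ofPred_eq, inner_neg_left, neg_nonpos]
    exact le_total _ _
  have hinter : φ (C ∩ {u | ⟪d, u⟫ ≤ 0} ∩ (C ∩ {u | ⟪-d, u⟫ ≤ 0})) = 0 := by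
    refine hsimple.apply_eq_zero_of_inner_eq_zero (hneg.inter hpos) hd ?_
    rintro u ⟨⟨-, hle⟩, -, hge⟩
    simp only [Set.mem_ofPred_eq, inner_neg_left, neg_nonpos] at hle hge
    exact le_antisymm hle hge
  have := hφ _ _ hneg hpos (by rwa [hunion])
  rw [hunion, hinter] at this
  linarith

theorem IsCutAdditive.sum_inter {ι : Type*} {φ : Set (E n) → ℝ} (hφ : IsCutAdditive φ)
    (s : Finset ι) {K : ι → Set (E n)} (hK : ∀ i, IsPolyhedralCone (K i)) :
    IsCutAdditive fun C => ∑ i ∈ s, φ (C ∩ K i) := by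
  intro C hC d hd
  simp only [← Finset.sum_add_distrib, Set.inter_right_comm _ _ (K _)]
  exact Finset.sum_congr rfl fun i _ => hφ _ (hC.inter (hK i)) d hd

theorem IsCutAdditive.eq_of_eq_on_oneSide {f g : Set (E n) → ℝ} (hf : IsCutAdditive f)
    (hg : IsCutAdditive g) (D : Finset (E n))
    (h : ∀ C, IsPolyhedralCone C → (∀ d ∈ D, OnOneSide d C) → f C = g C)
    (C : Set (E n)) (hC : IsPolyhedralCone C) : f C = g C := by
  induction D using Finset.induction_on generalizing C with
  | empty => exact h C hC (by simp)
  | insert a D _ ih =>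
    refine ih (fun C hC hD => ?_) C hC
    by_cases ha : a = 0
    · refine h C hC (Finset.forall_mem_insert _ _ _ |>.mpr ⟨Or.inl fun u _ => ?_, hD⟩)
      simp [ha]
    have hcut : ∀ b : E n, OnOneSide a (C ∩ {u | ⟪b, u⟫ ≤ 0}) →
        f (C ∩ {u | ⟪b, u⟫ ≤ 0}) = g (C ∩ {u | ⟪b, u⟫ ≤ 0}) := fun b hb =>
      h _ (hC.inter (isPolyhedralCone_halfspace b)) <| Finset.forall_mem_insert _ _ _ |>.mpr
        ⟨hb, fun d hd => (hD d hd).imp (polarDual_anti Set.inter_subset_left ·)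
          (polarDual_anti Set.inter_subset_left ·)⟩
    rw [hf C hC a ha, hg C hC a ha, hcut a (Or.inl fun u hu => hu.2),
      hcut (-a) (Or.inr fun u hu => hu.2)]

theorem IsSimple.apply_eq_sum_inter_normalCone {φ : Set (E n) → ℝ} (hsimple : IsSimple φ)
    {s : Finset (E n)} (hs : s.Nonempty) {C : Set (E n)} (hC : IsPolyhedralCone C)
    (hside : ∀ d ∈ s - s, OnOneSide d C) :
    φ C = ∑ x ∈ s, φ (C ∩ normalCone (s : Set (E n)) x) := by
  obtain ⟨m, hm, hmax⟩ := s.exists_mem_forall_rel_of_total (r := fun v w => v - w ∈ polarDual C)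
    hs (fun a b c hab hbc => by simpa using add_mem_polarDual hab hbc)
    (fun a ha b hb => by simpa [OnOneSide] using hside (a - b) (Finset.sub_mem_sub ha hb))
  have hCm : C ⊆ normalCone (s : Set (E n)) m := fun u hu v hv => by
    simpa [real_inner_comm] using hmax v hv u hu
  rw [Finset.sum_eq_single_of_mem m hm, Set.inter_eq_self_of_subset_left hCm]
  intro x hx hxm
  refine hsimple.apply_eq_zero_of_inner_eq_zero
    (hC.inter (isPolyhedralCone_normalCone_finset s x)) (sub_ne_zero.mpr hxm) ?_
  rintro u ⟨huC, huN⟩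
  refine le_antisymm (hmax x hx u huC) ?_
  have := huN m hm
  rw [real_inner_comm, ← neg_sub, inner_neg_left] at this
  linarith

theorem IsConeValuation.sum_normalCone_eq_one {φ : Set (E n) → ℝ} (hφ : IsConeValuation φ)
    (hsimple : IsSimple φ) (hnorm : φ Set.univ = 1) {s : Finset (E n)} (hs : s.Nonempty) :
    ∑ x ∈ s, φ (normalCone (s : Set (E n)) x) = 1 := by
  have := (hφ.isCutAdditive hsimple).eq_of_eq_on_oneSide
    ((hφ.isCutAdditive hsimple).sum_inter s (isPolyhedralCone_normalCone_finset s)) (s - s)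
    (fun C hC hside => hsimple.apply_eq_sum_inter_normalCone hs hC hside)
    Set.univ isPolyhedralCone_univ
  simpa [hnorm] using this.symm

end

/-- For a simple normalized valuation `φ` on cones and a compact convex polytope `P`:
`φ(N(P,x)) ≠ 0` forces `x` to be a vertex of `P`, and the sum of `φ(N(P,x))` over the
vertices of `P` equals `1`. -/
theorem stmt10 {n : ℕ} (φ : Set (E n) → ℝ)
    (hφ : IsConeValuation φ) (hsimple : IsSimple φ) (hnorm : φ (Set.univ : Set (E n)) = 1)
    (P : Set (E n)) (hP : IsPolytope P) :
    (∀ x ∈ P, φ (normalCone P x) ≠ 0 → x ∈ Set.extremePoints ℝ P) ∧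
    ∑ᶠ x ∈ Set.extremePoints ℝ P, φ (normalCone P x) = 1 := by
  have hvertex : ∀ x ∈ P, φ (normalCone P x) ≠ 0 → x ∈ Set.extremePoints ℝ P :=
    fun x hx hne => by_contra fun hext => hne (hsimple.apply_normalCone_eq_zero
      (hP.isPolyhedralCone_normalCone x) hx hext)
  refine ⟨hvertex, ?_⟩
  obtain ⟨s, hs, rfl⟩ := hP
  rw [finsum_mem_eq_sum_of_inter_support_eq (t := s) _ <| Set.ext fun x =>
    and_congr_left fun hx => ⟨fun hext => extremePoints_convexHull_subset hext,
      fun hxs => hvertex x (subset_convexHull ℝ _ hxs) hx⟩]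
  simp_rw [normalCone_convexHull]
  exact hφ.sum_normalCone_eq_one hsimple hnorm hs
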